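/- Let ℓ ≥ 1 and let α ∈ 𝒩^ℓ with κ_i = ν(α,i) (so ℓ = κ_0 + κ_1 + ⋯ + κ_{α_1}). Then the following identity of rational functions in ω holds: P_α(ω^{−1}) = ω^{ ℓ − κ_0 − (κ_{α_1}κ_{α_1−1} + ⋯ + κ_2κ_1 + κ_1κ_0) } · P_α(ω). -/

import Mathlib

noncomputable section
open scoped BigOperators Classical

abbrev K : Type := RatFunc ℂ

noncomputable def ω : K := RatFunc.X

def nu {k : ℕ} (α : Fin k → ℤ) (i : ℤ) : ℕ :=
  (Finset.univ.filter (fun j => α j = i)).card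

def shift {k : ℕ} (α : Fin k → ℤ) (m : ℤ) : Fin k → ℤ := fun j => α j + m

def Adm (k : ℕ) : Set (Fin k → ℤ) :=
  {α | (∀ j : Fin k, -((j : ℕ) : ℤ) ≤ α j ∧ α j ≤ (k : ℤ) - ((j : ℕ) : ℤ) - 1) ∧
       (∀ i : Fin k, ∀ h : (i : ℕ) + 1 < k, α i ≤ α ⟨(i : ℕ) + 1, h⟩ + 1)}

def Noninc (k : ℕ) : Set (Fin k → ℤ) :=
  {α | ∀ i : Fin k, ∀ h : (i : ℕ) + 1 < k,
      α ⟨(i : ℕ) + 1, h⟩ ≤ α i ∧ α i ≤ α ⟨(i : ℕ) + 1, h⟩ + 1}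

def NSet (k : ℕ) : Set (Fin (k+1) → ℤ) :=
  {α | α ∈ Adm (k+1) ∧ α ∈ Noninc (k+1) ∧ α (Fin.last k) = 0}

noncomputable def gbinom (m r : ℕ) : K :=
  ∏ s ∈ Finset.range r, (1 - ω ^ (m - s)) / (1 - ω ^ (s + 1))

noncomputable def P {k : ℕ} (α : Fin (k+1) → ℤ) : K :=
  if α ∈ Adm (k+1) ∩ Noninc (k+1) then
    (∏ i ∈ Finset.Icc (1 : ℤ) (α 0),
        gbinom (nu α i + nu α (i-1) - 1) (nu α i)) *
    (∏ i ∈ Finset.Icc (α (Fin.last k) + 1) (0 : ℤ),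
        gbinom (nu α i + nu α (i-1) - 1) (nu α (i-1)))
  else 0

/-!
Replacing ω by ω⁻¹ multiplies each factor (1 - ω^a)/(1 - ω^b) by ω^(b-a), so the Gaussian
binomial (m choose r)_ω picks up the factor ω^(-r(m-r)). For α ∈ 𝒩^ℓ the second product defining
P_α is empty and every κ_i with 0 ≤ i ≤ α_1 is positive (α descends from α_1 to 0 in steps of
at most one), so the i-th factor of P_α picks up ω^(κ_i - κ_i κ_{i-1}); summing the exponents
uses κ_1 + ⋯ + κ_{α_1} = ℓ - κ_0.
-/

theorem one_sub_inv_pow_div_one_sub_inv_pow {F : Type*} [Field F] {x : F} (hx : x ≠ 0) (a : ℕ)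
    {b : ℕ} (hb : 1 - x ^ b ≠ 0) :
    (1 - x⁻¹ ^ a) / (1 - x⁻¹ ^ b) = x ^ ((b : ℤ) - a) * ((1 - x ^ a) / (1 - x ^ b)) := by
  have hb' : x ^ b - 1 ≠ 0 := by rwa [← neg_ne_zero, neg_sub]
  rw [zpow_sub₀ hx, zpow_natCast, zpow_natCast, inv_pow, inv_pow]
  field_simp
  ring

theorem omega_ne_zero : ω ≠ 0 := RatFunc.X_ne_zero

theorem one_sub_omega_pow_ne_zero {b : ℕ} (hb : b ≠ 0) : 1 - ω ^ b ≠ 0 := by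
  rw [sub_ne_zero, ne_comm, ω, ← RatFunc.algebraMap_X, ← map_pow,
    ← map_one (algebraMap (Polynomial ℂ) K), (RatFunc.algebraMap_injective ℂ).ne_iff]
  intro h
  simpa [hb] using congrArg Polynomial.natDegree h

theorem map_one_sub_omega_pow_div (σ : K ≃ₐ[ℂ] K) (hσ : σ ω = ω⁻¹) (a : ℕ) {b : ℕ} (hb : b ≠ 0) :
    σ ((1 - ω ^ a) / (1 - ω ^ b)) = ω ^ ((b : ℤ) - a) * ((1 - ω ^ a) / (1 - ω ^ b)) := by
  simp only [map_div₀, map_sub, map_one, map_pow, hσ]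
  exact one_sub_inv_pow_div_one_sub_inv_pow omega_ne_zero a (one_sub_omega_pow_ne_zero hb)

theorem map_gbinom (σ : K ≃ₐ[ℂ] K) (hσ : σ ω = ω⁻¹) {m r : ℕ} (h : r ≤ m) :
    σ (gbinom m r) = ω ^ ((r : ℤ) * r - r * m) * gbinom m r := by
  induction r with
  | zero => simp [gbinom]
  | succ r ih =>
    rw [gbinom, Finset.prod_range_succ, ← gbinom, map_mul, ih (by omega),
      map_one_sub_omega_pow_div σ hσ _ r.succ_ne_zero, mul_mul_mul_comm, ← zpow_add₀ omega_ne_zero]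
    congr 2
    push_cast [Nat.cast_sub (show r ≤ m by omega)]
    ring

theorem map_prod_of_forall_eq_zpow_mul {ι G F : Type*} [CommGroupWithZero G] [FunLike F G G]
    [MonoidHomClass F G G] (φ : F) {c : G} (hc : c ≠ 0) (s : Finset ι) {f : ι → G} {e : ι → ℤ}
    (h : ∀ i ∈ s, φ (f i) = c ^ e i * f i) :
    φ (∏ i ∈ s, f i) = c ^ (∑ i ∈ s, e i) * ∏ i ∈ s, f i := by
  induction s using Finset.cons_induction with
  | empty => simp
  | cons i s hi ih =>
    simp only [Finset.mem_cons, forall_eq_or_imp] at h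
    rw [Finset.prod_cons, Finset.sum_cons, map_mul, h.1, ih h.2, zpow_add₀ hc, mul_mul_mul_comm]

theorem sum_nu_eq_of_forall_mem {k : ℕ} {α : Fin k → ℤ} {t : Finset ℤ} (h : ∀ j, α j ∈ t) :
    ∑ i ∈ t, nu α i = k := by
  unfold nu
  simpa using (Finset.card_eq_sum_card_fiberwise (s := Finset.univ) fun j _ => h j).symm

section Noninc

variable {l : ℕ} {α : Fin (l + 1) → ℤ}

theorem mem_Noninc_iff :
    α ∈ Noninc (l + 1) ↔ ∀ j : Fin l, α j.succ ≤ α j.castSucc ∧ α j.castSucc ≤ α j.succ + 1 :=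
  ⟨fun h j => h j.castSucc (by simp), fun h i hi => h ⟨i, by omega⟩⟩

theorem antitone_of_mem_Noninc (h : α ∈ Noninc (l + 1)) : Antitone α :=
  Fin.antitone_iff_succ_le.2 fun j => (mem_Noninc_iff.1 h j).1

theorem exists_eq_of_mem_Noninc (h : α ∈ Noninc (l + 1)) {i : ℤ} (j : Fin (l + 1))
    (hj : α j ≤ i) (hi : i ≤ α 0) : ∃ k, α k = i := by
  induction j using Fin.induction with
  | zero => exact ⟨0, le_antisymm hj hi⟩
  | succ j ih =>
    by_cases hji : α j.castSucc ≤ i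
    · exact ih hji
    · exact ⟨j.succ, by linarith [(mem_Noninc_iff.1 h j).2]⟩

theorem mem_Icc_of_mem_Noninc (hα : α ∈ Noninc (l + 1)) (hlast : α (Fin.last l) = 0)
    (j : Fin (l + 1)) : α j ∈ Finset.Icc 0 (α 0) :=
  Finset.mem_Icc.2 ⟨hlast ▸ antitone_of_mem_Noninc hα (Fin.le_last j),
    antitone_of_mem_Noninc hα (Fin.zero_le j)⟩

theorem nu_pos_of_mem_Noninc (hα : α ∈ Noninc (l + 1)) (hlast : α (Fin.last l) = 0)
    {i : ℤ} (h0 : 0 ≤ i) (hi : i ≤ α 0) : 0 < nu α i := by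
  obtain ⟨k, hk⟩ := exists_eq_of_mem_Noninc hα (Fin.last l) (hlast ▸ h0) hi
  exact Finset.card_pos.2 ⟨k, by simp [hk]⟩

theorem nu_zero_add_sum_nu_Icc (hα : α ∈ Noninc (l + 1)) (hlast : α (Fin.last l) = 0) :
    nu α 0 + ∑ i ∈ Finset.Icc 1 (α 0), nu α i = l + 1 := by
  have h0 := (Finset.mem_Icc.1 (mem_Icc_of_mem_Noninc hα hlast 0)).1
  have := sum_nu_eq_of_forall_mem (mem_Icc_of_mem_Noninc hα hlast)
  rwa [Finset.Icc_eq_cons_Ioc h0, Finset.sum_cons, ← Finset.Icc_add_one_left_eq_Ioc,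
    zero_add] at this

end Noninc

theorem P_eq_prod_of_mem_NSet {l : ℕ} {α : Fin (l + 1) → ℤ} (hα : α ∈ NSet l) :
    P α = ∏ i ∈ Finset.Icc 1 (α 0), gbinom (nu α i + nu α (i - 1) - 1) (nu α i) := by
  obtain ⟨hadm, hnon, hlast⟩ := hα
  rw [P, if_pos ⟨hadm, hnon⟩, hlast, zero_add, Finset.Icc_eq_empty_of_lt one_pos,
    Finset.prod_empty, mul_one]

/-- behaviour of `P_α` under `ω ↦ ω⁻¹`. -/
theorem stmt9 (l : ℕ) (α : Fin (l+1) → ℤ) (hα : α ∈ NSet l)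
    (σ : K ≃ₐ[ℂ] K) (hσ : σ ω = ω⁻¹) :
    σ (P α) =
      ω ^ ((((l : ℤ) + 1) - (nu α 0 : ℤ))
            - ∑ i ∈ Finset.Icc (1 : ℤ) (α 0), ((nu α i : ℤ) * (nu α (i-1) : ℤ)))
        * P α := by
  rw [P_eq_prod_of_mem_NSet hα]
  obtain ⟨-, hnon, hlast⟩ := hα
  have hsum : ∑ i ∈ Finset.Icc 1 (α 0), (nu α i : ℤ) = l + 1 - nu α 0 := by
    have := nu_zero_add_sum_nu_Icc hnon hlast
    push_cast [← Nat.cast_sum]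
    omega
  rw [map_prod_of_forall_eq_zpow_mul σ omega_ne_zero _
    (e := fun i => (nu α i : ℤ) - nu α i * nu α (i - 1)) fun i hi => ?_]
  · rw [Finset.sum_sub_distrib, hsum]
  · obtain ⟨hi1, hi⟩ := Finset.mem_Icc.1 hi
    have hκ := nu_pos_of_mem_Noninc hnon hlast (by omega) hi
    have hκ' := nu_pos_of_mem_Noninc hnon hlast (i := i - 1) (by omega) (by omega)
    rw [map_gbinom σ hσ (by omega), Nat.cast_sub (by omega)]
    congr 2
    push_cast
    ring
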